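/- arXiv:2207.12897 — 2 statements merged into one kernel-verified Lean document; each statement's English description precedes it below -/
import Mathlib

section
/- Let μ₁ and μ₂ be probability measures on a measurable space S with d_TV(μ₁, μ₂) < 1. For each n ∈ ℕ, let κ_n be a Markov kernel from S to a measurable space Ω_n, and set P_n = μ₁ ∘ κ_n and Q_n = μ₂ ∘ κ_n (where μ ∘ κ denotes A ↦ ∫ κ(x)(A) dμ(x)). Then for any distinct real numbers ρ₁ ≠ ρ₂, there is no sequence of measurable functions ρ̂_n : Ω_n → ℝ such that ρ̂_n converges in probability to ρ₁ under P_n and to ρ₂ under Q_n. -/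
/-!
A Markov kernel cannot increase total variation: `μ₁ ≤ (μ₁ - μ₂) + μ₂`, composing with `κ`
preserves the mass of `μ₁ - μ₂`, and by the Hahn decomposition that mass is `μ₁ s - μ₂ s` for
some measurable `s`, hence at most `d_TV(μ₁, μ₂)`. So `d_TV(P n, Q n) ≤ d_TV(μ₁, μ₂) < 1` for all
`n`. A consistent estimator would give tests `A n = {ε < |ρ̂ n - ρ₁|}` with
`P n (A n) + Q n (A n)ᶜ → 0`, while every test has error sum at least `1 - d_TV(P n, Q n)`.
-/

open MeasureTheory ProbabilityTheory Filter

noncomputable def tvDist {S : Type*} [MeasurableSpace S] (μ₁ μ₂ : Measure S) : ℝ :=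
  ⨆ A : {A : Set S // MeasurableSet A}, |(μ₁ A.1).toReal - (μ₂ A.1).toReal|

section

variable {S T : Type*} [MeasurableSpace S] [MeasurableSpace T]

lemma tvDist_comm (μ ν : Measure S) : tvDist μ ν = tvDist ν μ := by
  simp only [tvDist, abs_sub_comm]

lemma abs_toReal_sub_le_tvDist (μ ν : Measure S) [IsFiniteMeasure μ] [IsFiniteMeasure ν]
    {A : Set S} (hA : MeasurableSet A) : |(μ A).toReal - (ν A).toReal| ≤ tvDist μ ν := by
  refine le_ciSup
    (f := fun A : {A : Set S // MeasurableSet A} ↦ |(μ A.1).toReal - (ν A.1).toReal|)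
    ⟨(μ .univ).toReal + (ν .univ).toReal, ?_⟩ ⟨A, hA⟩
  rintro _ ⟨B, rfl⟩
  refine (abs_sub _ _).trans ?_
  simp only [abs_of_nonneg ENNReal.toReal_nonneg]
  gcongr <;> first | exact measure_ne_top _ _ | exact Set.subset_univ _

lemma tvDist_le_of_forall_abs_le {μ ν : Measure S} {c : ℝ}
    (h : ∀ A, MeasurableSet A → |(μ A).toReal - (ν A).toReal| ≤ c) : tvDist μ ν ≤ c :=
  have : Nonempty {A : Set S // MeasurableSet A} := ⟨⟨∅, .empty⟩⟩
  ciSup_le fun A ↦ h A.1 A.2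

namespace MeasureTheory.Measure

lemma exists_sub_apply_univ_eq (μ ν : Measure S) [IsFiniteMeasure μ] [IsFiniteMeasure ν] :
    ∃ s, MeasurableSet s ∧ (μ - ν) .univ = μ s - ν s := by
  obtain ⟨s, hs⟩ := exists_isHahnDecomposition μ ν
  refine ⟨sᶜ, hs.measurableSet.compl, ?_⟩
  rw [← measure_add_measure_compl hs.measurableSet,
    sub_apply_eq_zero_of_restrict_le_restrict hs.le_on hs.measurableSet, zero_add,
    ← restrict_apply_univ, restrict_sub_eq_restrict_sub_restrict hs.measurableSet.compl,
    sub_apply .univ hs.ge_on_compl, restrict_apply_univ, restrict_apply_univ]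

lemma toReal_sub_apply_univ_le_tvDist (μ ν : Measure S) [IsFiniteMeasure μ]
    [IsFiniteMeasure ν] : ((μ - ν) .univ).toReal ≤ tvDist μ ν := by
  obtain ⟨s, hs, hs_eq⟩ := μ.exists_sub_apply_univ_eq ν
  refine le_trans ?_ (abs_toReal_sub_le_tvDist μ ν hs)
  rcases le_total (ν s) (μ s) with h | h
  · rw [hs_eq, ENNReal.toReal_sub_of_le h (measure_ne_top μ s)]
    exact le_abs_self _
  · rw [hs_eq, tsub_eq_zero_of_le h, ENNReal.toReal_zero]
    exact abs_nonneg _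

lemma toReal_apply_sub_le_of_le_add {P Q R : Measure S} [IsFiniteMeasure Q]
    [IsFiniteMeasure R] (h : P ≤ R + Q) (A : Set S) :
    (P A).toReal - (Q A).toReal ≤ (R .univ).toReal := by
  have hPA : P A ≤ R .univ + Q A :=
    (h A).trans (add_le_add_left (measure_mono (Set.subset_univ A)) _)
  have := ENNReal.toReal_mono (by finiteness) hPA
  rw [ENNReal.toReal_add (by finiteness) (by finiteness)] at this
  linarith

lemma comp_mono (κ : Kernel S T) {μ ν : Measure S} (h : μ ≤ ν) : κ ∘ₘ μ ≤ κ ∘ₘ ν :=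
  le_iff.2 fun A hA ↦ by
    rw [bind_apply hA κ.aemeasurable, bind_apply hA κ.aemeasurable]
    exact lintegral_mono' h le_rfl

end MeasureTheory.Measure

lemma tvDist_comp_le (κ : Kernel S T) [IsMarkovKernel κ] (μ ν : Measure S) [IsFiniteMeasure μ]
    [IsFiniteMeasure ν] : tvDist (κ ∘ₘ μ) (κ ∘ₘ ν) ≤ tvDist μ ν := by
  have key : ∀ (μ ν : Measure S) [IsFiniteMeasure μ] [IsFiniteMeasure ν] (A : Set T),
      ((κ ∘ₘ μ) A).toReal - ((κ ∘ₘ ν) A).toReal ≤ tvDist μ ν := by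
    intro μ ν _ _ A
    have hle : κ ∘ₘ μ ≤ κ ∘ₘ (μ - ν) + κ ∘ₘ ν := by
      rw [← Measure.comp_add]
      exact Measure.comp_mono κ (Measure.sub_le_iff_le_add.mp le_rfl)
    calc _ ≤ ((κ ∘ₘ (μ - ν)) .univ).toReal := Measure.toReal_apply_sub_le_of_le_add hle A
      _ = ((μ - ν) .univ).toReal := by rw [Measure.comp_apply_univ]
      _ ≤ tvDist μ ν := Measure.toReal_sub_apply_univ_le_tvDist μ ν
  exact tvDist_le_of_forall_abs_le fun A _ ↦ abs_sub_le_iff.2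
    ⟨key μ ν A, (tvDist_comm μ ν).symm ▸ key ν μ A⟩

lemma one_sub_tvDist_le_add_compl (P Q : Measure S) [IsProbabilityMeasure P]
    [IsProbabilityMeasure Q] {A : Set S} (hA : MeasurableSet A) :
    1 - tvDist P Q ≤ (P A).toReal + (Q Aᶜ).toReal := by
  have hQ : (Q Aᶜ).toReal = 1 - (Q A).toReal := by
    rw [prob_compl_eq_one_sub hA, ENNReal.toReal_sub_of_le prob_le_one ENNReal.one_ne_top,
      ENNReal.toReal_one]
  have := (abs_sub_le_iff.1 (abs_toReal_sub_le_tvDist P Q hA)).2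
  linarith

end

/-- If `μ₁` and `μ₂` are probability measures with `d_TV(μ₁, μ₂) < 1`, and for each `n` the
measures `P n` and `Q n` are obtained by passing `μ₁` and `μ₂` through a common Markov kernel
`κ n`, then no sequence of measurable estimators can converge in probability to `ρ₁` under `P n`
and to a different value `ρ₂` under `Q n`. -/
theorem no_consistent_estimator_through_kernels {S : Type*} [MeasurableSpace S]
    {Ω : ℕ → Type*} [∀ n, MeasurableSpace (Ω n)]
    (μ₁ μ₂ : Measure S) [IsProbabilityMeasure μ₁] [IsProbabilityMeasure μ₂]
    (hTV : tvDist μ₁ μ₂ < 1)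
    (κ : ∀ n, Kernel S (Ω n)) [∀ n, IsMarkovKernel (κ n)]
    (P Q : ∀ n, Measure (Ω n))
    (hP : ∀ n, P n = μ₁.bind (fun x => κ n x))
    (hQ : ∀ n, Q n = μ₂.bind (fun x => κ n x))
    (ρ₁ ρ₂ : ℝ) (hρ : ρ₁ ≠ ρ₂) :
    ¬ ∃ ρhat : ∀ n, Ω n → ℝ, (∀ n, Measurable (ρhat n)) ∧
      (∀ ε > 0, Tendsto (fun n => ((P n) {ω | ε < |ρhat n ω - ρ₁|}).toReal) atTop (nhds 0)) ∧
      (∀ ε > 0, Tendsto (fun n => ((Q n) {ω | ε < |ρhat n ω - ρ₂|}).toReal) atTop (nhds 0)) := by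
  rintro ⟨ρhat, hmeas, hP₁, hQ₂⟩
  obtain rfl : P = fun n ↦ κ n ∘ₘ μ₁ := funext hP
  obtain rfl : Q = fun n ↦ κ n ∘ₘ μ₂ := funext hQ
  set ε := |ρ₁ - ρ₂| / 3
  have hε : 0 < ε := by have := abs_pos.2 (sub_ne_zero.2 hρ); positivity
  set A : ∀ n, Set (Ω n) := fun n ↦ {ω | ε < |ρhat n ω - ρ₁|}
  have hA n : MeasurableSet (A n) :=
    measurableSet_lt measurable_const ((hmeas n).sub measurable_const).abs
  have hAc n : (A n)ᶜ ⊆ {ω | ε < |ρhat n ω - ρ₂|} := fun ω hω ↦ by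
    have := abs_sub_le ρ₁ (ρhat n ω) ρ₂
    simp only [A, Set.mem_compl_iff, Set.mem_ofPred_eq, not_lt, abs_sub_comm ρ₁ (ρhat n ω)]
      at hω this ⊢
    linarith [show |ρ₁ - ρ₂| = 3 * ε by ring]
  have hQc : Tendsto (fun n ↦ ((κ n ∘ₘ μ₂) (A n)ᶜ).toReal) atTop (nhds 0) :=
    squeeze_zero (fun _ ↦ ENNReal.toReal_nonneg)
      (fun n ↦ ENNReal.toReal_mono (measure_ne_top _ _) (measure_mono (hAc n))) (hQ₂ ε hε)
  have herr n : 1 - tvDist μ₁ μ₂ ≤ ((κ n ∘ₘ μ₁) (A n)).toReal + ((κ n ∘ₘ μ₂) (A n)ᶜ).toReal :=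
    (sub_le_sub_left (tvDist_comp_le (κ n) μ₁ μ₂) 1).trans
      (one_sub_tvDist_le_add_compl _ _ (hA n))
  have := ge_of_tendsto' (by simpa using (hP₁ ε hε).add hQc) herr
  linarith
end

section
/- Let I ⊆ ℝ and let φ : I → ℝ be a continuous injective function with continuous inverse φ⁻¹ : φ(I) → I, and let ρ ∈ I. For each k ∈ ℕ, let Y_{1,k}, …, Y_{k,k} be random variables taking values in I, and let t_{i,k} ∈ [0, h*] and t_{ij,k} ∈ [0, 1/k] (for i ≠ j) be constants with h* < ∞. Let u, v : [0, h*] → ℝ be continuous with u > 0, and C ≥ 0 a constant, such that: (i) E[φ(Y_{i,k})] = u(t_{i,k}) φ(ρ) + v(t_{i,k}) for all i, k; (ii) Var(φ(Y_{i,k})) ≤ C t_{i,k} for all i, k; (iii) Cov(φ(Y_{i,k}), φ(Y_{j,k})) ≤ (max_{[0,h*]} u)² · C · t_{ij,k} for all i ≠ j. Then the estimator ρ̂_k = φ⁻¹( (1/k) ∑_{i=1}^k (φ(Y_{i,k}) − v(t_{i,k})) / u(t_{i,k}) ) converges in probability to ρ as k → ∞. -/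
open MeasureTheory ProbabilityTheory Filter

/-- The covariance of two real random variables. -/
noncomputable def cov {Ω : Type*} [MeasurableSpace Ω] (X Y : Ω → ℝ) (P : Measure Ω) : ℝ :=
  ∫ ω, (X ω - ∫ ω', X ω' ∂P) * (Y ω - ∫ ω', Y ω' ∂P) ∂P

/-! The rescaled averages `Z k = (1/k) ∑ i, (φ (Y k i) - v (t k i)) / u (t k i)` have mean exactly
`φ ρ`. Since `u ≥ m > 0` on the compact `[0, h*]`, every weight `1 / (k u (t k i))` is at most
`1 / (k m)`; the `k` variances are bounded and the `k²` covariances are `O(1/k)`, so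
`Var (Z k) = O(1/k)`. Chebyshev's inequality gives `Z k → φ ρ` in probability, and continuity of
`ψ` at `φ ρ` carries this over to `ψ (Z k) → ψ (φ ρ) = ρ`. -/

open Topology

section

variable {Ω ι : Type*} [Fintype ι]

noncomputable def rescaledMean (X : ι → Ω → ℝ) (a b : ι → ℝ) (ω : Ω) : ℝ :=
  1 / (Fintype.card ι : ℝ) * ∑ i, (X i ω - b i) / a i

lemma rescaledMean_eq_sum_mul_sub (X : ι → Ω → ℝ) (a b : ι → ℝ) :
    rescaledMean X a b = fun ω ↦
      ∑ i, (Fintype.card ι * a i)⁻¹ * X i ω - ∑ i, (Fintype.card ι * a i)⁻¹ * b i := by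
  ext ω
  rw [rescaledMean, Finset.mul_sum, ← Finset.sum_sub_distrib]
  refine Finset.sum_congr rfl fun i _ ↦ ?_
  ring

variable [MeasurableSpace Ω] {P : Measure Ω} {X : ι → Ω → ℝ}

theorem variance_fun_sum_mul_le [IsFiniteMeasure P] (hX : ∀ i, MemLp (X i) 2 P)
    {a : ι → ℝ} {A D E : ℝ} (ha₀ : ∀ i, 0 ≤ a i) (haA : ∀ i, a i ≤ A) (hE : 0 ≤ E)
    (hD : ∀ i, Var[X i; P] ≤ D) (hcov : ∀ i j, i ≠ j → cov[X i, X j; P] ≤ E) :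
    Var[fun ω ↦ ∑ i, a i * X i ω; P] ≤ Fintype.card ι * A ^ 2 * (D + Fintype.card ι * E) := by
  classical
  set B : ι → ι → ℝ := fun i j ↦ (if i = j then D else 0) + E
  have hcovB : ∀ i j, cov[X i, X j; P] ≤ B i j := fun i j ↦ by
    by_cases hij : i = j
    · subst hij
      simpa [B, covariance_self (hX i).aemeasurable] using (hD i).trans (le_add_of_nonneg_right hE)
    · simpa [B, hij] using hcov i j hij
  have hB : ∀ i j, 0 ≤ B i j := fun i j ↦ by
    by_cases hij : i = j
    · subst hij
      simpa [B] using add_nonneg ((variance_nonneg _ _).trans (hD i)) hE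
    · simpa [B, hij] using hE
  have hA : ∀ i j, a i * a j ≤ A ^ 2 := fun i j ↦
    sq A ▸ mul_le_mul (haA i) (haA j) (ha₀ j) ((ha₀ i).trans (haA i))
  calc Var[fun ω ↦ ∑ i, a i * X i ω; P] = ∑ i, ∑ j, a i * a j * cov[X i, X j; P] := by
        rw [variance_fun_sum fun i ↦ (hX i).const_mul (a i)]
        refine Finset.sum_congr rfl fun i _ ↦ Finset.sum_congr rfl fun j _ ↦ ?_
        rw [covariance_const_mul_left, covariance_const_mul_right]
        ring
    _ ≤ ∑ i, ∑ j, A ^ 2 * B i j := by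
        refine Finset.sum_le_sum fun i _ ↦ Finset.sum_le_sum fun j _ ↦ ?_
        exact (mul_le_mul_of_nonneg_left (hcovB i j) (mul_nonneg (ha₀ i) (ha₀ j))).trans
          (mul_le_mul_of_nonneg_right (hA i j) (hB i j))
    _ = Fintype.card ι * A ^ 2 * (D + Fintype.card ι * E) := by
        simp [B, ← Finset.mul_sum, Finset.sum_add_distrib]
        ring

variable {a b : ι → ℝ}

lemma memLp_rescaledMean [IsFiniteMeasure P] (hX : ∀ i, MemLp (X i) 2 P) :
    MemLp (rescaledMean X a b) 2 P := by
  rw [rescaledMean_eq_sum_mul_sub]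
  exact (memLp_finsetSum _ fun i _ ↦ (hX i).const_mul _).sub (memLp_const _)

lemma integral_rescaledMean [IsProbabilityMeasure P] [Nonempty ι] (hX : ∀ i, Integrable (X i) P)
    (ha : ∀ i, a i ≠ 0) {x : ℝ} (hmean : ∀ i, P[X i] = a i * x + b i) :
    P[rescaledMean X a b] = x := by
  have hterm : ∀ i, P[fun ω ↦ (X i ω - b i) / a i] = x := fun i ↦ by
    rw [integral_div, integral_sub (hX i) (integrable_const _), integral_const, hmean,
      probReal_univ, one_smul, add_sub_cancel_right, mul_div_cancel_left₀ _ (ha i)]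
  unfold rescaledMean
  rw [integral_const_mul, integral_finsetSum (f := fun i ω ↦ (X i ω - b i) / a i)
    _ fun i _ ↦ ((hX i).sub (integrable_const _)).div_const _]
  simp only [hterm, Finset.sum_const, Finset.card_univ, nsmul_eq_mul]
  field_simp

lemma variance_rescaledMean_le [IsProbabilityMeasure P] (hX : ∀ i, MemLp (X i) 2 P)
    {m D E : ℝ} (hm : 0 < m) (ha : ∀ i, m ≤ a i) (hE : 0 ≤ E) (hD : ∀ i, Var[X i; P] ≤ D)
    (hcov : ∀ i j, i ≠ j → cov[X i, X j; P] ≤ E / Fintype.card ι) :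
    Var[rescaledMean X a b; P] ≤ (D + E) / m ^ 2 / Fintype.card ι := by
  have hweight : ∀ i, 0 ≤ ((Fintype.card ι : ℝ) * a i)⁻¹ := fun i ↦ by
    have := hm.trans_le (ha i)
    positivity
  have hweight_le : ∀ i, ((Fintype.card ι : ℝ) * a i)⁻¹ ≤ ((Fintype.card ι : ℝ) * m)⁻¹ :=
      fun i ↦ by
    have : Nonempty ι := ⟨i⟩
    have : (0 : ℝ) < Fintype.card ι := Nat.cast_pos.2 Fintype.card_pos
    gcongr
    exact ha i
  rw [rescaledMean_eq_sum_mul_sub,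
    variance_sub_const (memLp_finsetSum _ fun i _ ↦ (hX i).const_mul _).1]
  refine (variance_fun_sum_mul_le hX hweight hweight_le (by positivity) hD hcov).trans_eq ?_
  rcases eq_or_ne (Fintype.card ι : ℝ) 0 with hn | hn
  · simp [hn]
  · field_simp

theorem tendstoInMeasure_const_of_tendsto_variance {κ : Type*} {l : Filter κ} [IsFiniteMeasure P]
    {Z : κ → Ω → ℝ} {c : ℝ} (hZ : ∀ k, MemLp (Z k) 2 P) (hmean : ∀ᶠ k in l, P[Z k] = c)
    (hvar : Tendsto (fun k ↦ Var[Z k; P]) l (𝓝 0)) : TendstoInMeasure P Z l fun _ ↦ c := by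
  rw [tendstoInMeasure_iff_dist]
  intro δ hδ
  have hchebyshev : Tendsto (fun k ↦ ENNReal.ofReal (Var[Z k; P] / δ ^ 2)) l (𝓝 0) := by
    simpa using ENNReal.tendsto_ofReal (hvar.div_const (δ ^ 2))
  refine tendsto_of_tendsto_of_tendsto_of_le_of_le' tendsto_const_nhds hchebyshev
    (Eventually.of_forall fun _ ↦ zero_le) ?_
  filter_upwards [hmean] with k hk
  simpa [Real.dist_eq, hk] using meas_ge_le_variance_div_sq (hZ k) hδ

theorem MeasureTheory.TendstoInMeasure.comp_continuousAt {κ E F : Type*} [PseudoMetricSpace E]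
    [PseudoMetricSpace F] {l : Filter κ} {f : κ → Ω → E} {c : E}
    (hf : TendstoInMeasure P f l fun _ ↦ c) {g : E → F} (hg : ContinuousAt g c) :
    TendstoInMeasure P (fun k ω ↦ g (f k ω)) l fun _ ↦ g c := by
  rw [tendstoInMeasure_iff_dist] at hf ⊢
  intro ε hε
  obtain ⟨δ, hδ, hgδ⟩ := Metric.continuousAt_iff.1 hg ε hε
  refine tendsto_of_tendsto_of_tendsto_of_le_of_le tendsto_const_nhds (hf δ hδ)
    (fun _ ↦ zero_le) fun k ↦ measure_mono fun ω hω ↦ ?_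
  exact not_lt.1 fun hfδ ↦ (hgδ hfδ).not_ge hω

end

theorem estimator_tendsto_in_probability_general {Ω : Type*} [MeasurableSpace Ω]
    (P : Measure Ω) [IsProbabilityMeasure P]
    (I : Set ℝ) (φ ψ : ℝ → ℝ)
    (hψc : Continuous ψ) (hψφ : ∀ x ∈ I, ψ (φ x) = x)
    (ρ : ℝ) (hρ : ρ ∈ I)
    (hstar : ℝ)
    (Y : (k : ℕ) → Fin k → Ω → ℝ)
    (hY2 : ∀ k i, MemLp (fun ω => φ (Y k i ω)) 2 P)
    (t : (k : ℕ) → Fin k → ℝ) (ht : ∀ k i, t k i ∈ Set.Icc 0 hstar)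
    (τ : (k : ℕ) → Fin k → Fin k → ℝ)
    (hτ : ∀ k (i j : Fin k), i ≠ j → τ k i j ∈ Set.Icc (0 : ℝ) (1 / k))
    (u v : ℝ → ℝ)
    (huc : ContinuousOn u (Set.Icc 0 hstar))
    (hupos : ∀ s ∈ Set.Icc 0 hstar, 0 < u s)
    (C : ℝ) (hC : 0 ≤ C)
    (hmean : ∀ k i, ∫ ω, φ (Y k i ω) ∂P = u (t k i) * φ ρ + v (t k i))
    (hvar : ∀ k i, variance (fun ω => φ (Y k i ω)) P ≤ C * t k i)
    (hcov : ∀ k (i j : Fin k), i ≠ j →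
      cov (fun ω => φ (Y k i ω)) (fun ω => φ (Y k j ω)) P
        ≤ (sSup (u '' Set.Icc 0 hstar)) ^ 2 * C * τ k i j) :
    ∀ ε > 0,
      Tendsto
        (fun k : ℕ =>
          (P {ω | ε <
            |ψ ((1 / (k : ℝ)) * ∑ i, (φ (Y k i ω) - v (t k i)) / u (t k i)) - ρ|}).toReal)
        atTop (nhds 0) := by
  obtain ⟨m, hm, hmu⟩ := isCompact_Icc.exists_forall_le' huc hupos
  set M := sSup (u '' Set.Icc 0 hstar)
  set Z : ℕ → Ω → ℝ := fun k ↦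
    rescaledMean (fun i ω ↦ φ (Y k i ω)) (fun i ↦ u (t k i)) (fun i ↦ v (t k i))
  have hmeanZ : ∀ᶠ k in atTop, P[Z k] = φ ρ := by
    filter_upwards [eventually_ge_atTop 1] with k hk
    have : Nonempty (Fin k) := ⟨⟨0, hk⟩⟩
    exact integral_rescaledMean (fun i ↦ (hY2 k i).integrable one_le_two)
      (fun i ↦ (hupos _ (ht k i)).ne') (hmean k)
  have hvarZ : ∀ k, Var[Z k; P] ≤ (C * hstar + M ^ 2 * C) / m ^ 2 / k := fun k ↦ by
    have hdiag : ∀ i, Var[fun ω ↦ φ (Y k i ω); P] ≤ C * hstar := fun i ↦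
      (hvar k i).trans (mul_le_mul_of_nonneg_left (ht k i).2 hC)
    -- `cov` is definitionally Mathlib's `covariance`.
    have hoff : ∀ i j, i ≠ j → cov[fun ω ↦ φ (Y k i ω), fun ω ↦ φ (Y k j ω); P]
        ≤ M ^ 2 * C / Fintype.card (Fin k) := fun i j hij ↦ by
      rw [Fintype.card_fin, div_eq_mul_one_div]
      exact (hcov k i j hij).trans (mul_le_mul_of_nonneg_left (hτ k i j hij).2 (by positivity))
    exact (variance_rescaledMean_le (hY2 k) hm (fun i ↦ hmu _ (ht k i)) (by positivity) hdiag
      hoff).trans_eq (by rw [Fintype.card_fin])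
  have hZ : TendstoInMeasure P Z atTop fun _ ↦ φ ρ :=
    tendstoInMeasure_const_of_tendsto_variance (fun k ↦ memLp_rescaledMean (hY2 k)) hmeanZ
      (squeeze_zero (fun _ ↦ variance_nonneg _ _) hvarZ (tendsto_const_div_atTop_nhds_zero_nat _))
  have hψZ := hZ.comp_continuousAt hψc.continuousAt
  rw [hψφ ρ hρ] at hψZ
  intro ε hε
  refine squeeze_zero (fun _ ↦ ENNReal.toReal_nonneg) (fun k ↦ measureReal_mono fun ω hω ↦ ?_)
    (tendstoInMeasure_iff_measureReal_dist.1 hψZ ε hε)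
  simp only [Z, rescaledMean, Fintype.card_fin, Real.dist_eq, Set.mem_ofPred_eq] at hω ⊢
  exact hω.le

/-- Abstract core of the sufficiency proof: let `φ : I → ℝ` be continuous and injective with a
continuous inverse `ψ` (so `ψ (φ x) = x` on `I`), and `ρ ∈ I`. For each `k`, let
`Y k 1, …, Y k k` be `I`-valued random variables, with times `t k i ∈ [0, h*]` and
`τ k i j ∈ [0, 1/k]`, and `u, v` continuous on `[0, h*]` with `u > 0` such that
`E[φ(Y k i)] = u (t k i) * φ ρ + v (t k i)`, `Var(φ(Y k i)) ≤ C * t k i`, and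
`Cov(φ(Y k i), φ(Y k j)) ≤ (max u)² * C * τ k i j` for `i ≠ j`. Then the estimator
`ρ̂ k = ψ ((1/k) ∑ i, (φ(Y k i) - v (t k i)) / u (t k i))` converges in probability to `ρ`. -/
theorem estimator_tendsto_in_probability {Ω : Type*} [MeasurableSpace Ω]
    (P : Measure Ω) [IsProbabilityMeasure P]
    (I : Set ℝ) (φ ψ : ℝ → ℝ)
    (hφc : ContinuousOn φ I) (hφinj : Set.InjOn φ I)
    (hψc : Continuous ψ) (hψmaps : Set.MapsTo ψ (φ '' I) I) (hψφ : ∀ x ∈ I, ψ (φ x) = x)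
    (ρ : ℝ) (hρ : ρ ∈ I)
    (hstar : ℝ)
    (Y : (k : ℕ) → Fin k → Ω → ℝ) (hYmeas : ∀ k i, Measurable (Y k i))
    (hYI : ∀ k i ω, Y k i ω ∈ I)
    (hY2 : ∀ k i, MemLp (fun ω => φ (Y k i ω)) 2 P)
    (t : (k : ℕ) → Fin k → ℝ) (ht : ∀ k i, t k i ∈ Set.Icc 0 hstar)
    (τ : (k : ℕ) → Fin k → Fin k → ℝ)
    (hτ : ∀ k (i j : Fin k), i ≠ j → τ k i j ∈ Set.Icc (0 : ℝ) (1 / k))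
    (u v : ℝ → ℝ)
    (huc : ContinuousOn u (Set.Icc 0 hstar)) (hvc : ContinuousOn v (Set.Icc 0 hstar))
    (hupos : ∀ s ∈ Set.Icc 0 hstar, 0 < u s)
    (C : ℝ) (hC : 0 ≤ C)
    (hmean : ∀ k i, ∫ ω, φ (Y k i ω) ∂P = u (t k i) * φ ρ + v (t k i))
    (hvar : ∀ k i, variance (fun ω => φ (Y k i ω)) P ≤ C * t k i)
    (hcov : ∀ k (i j : Fin k), i ≠ j →
      cov (fun ω => φ (Y k i ω)) (fun ω => φ (Y k j ω)) P
        ≤ (sSup (u '' Set.Icc 0 hstar)) ^ 2 * C * τ k i j) :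
    ∀ ε > 0,
      Tendsto
        (fun k : ℕ =>
          (P {ω | ε <
            |ψ ((1 / (k : ℝ)) * ∑ i, (φ (Y k i ω) - v (t k i)) / u (t k i)) - ρ|}).toReal)
        atTop (nhds 0) :=
  estimator_tendsto_in_probability_general P I φ ψ hψc hψφ ρ hρ hstar Y hY2 t ht τ hτ u v huc hupos
    C hC hmean hvar hcov
end
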